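/- Let A be a set of positive integers with 1 ∈ A. Then f_{A,3}(x) equals x(x+1)(x+8)/6 if both 2,3 ∈ A; x(x²+9x+2)/6 if 2 ∈ A and 3 ∉ A; x(x²+3x+8)/6 if 2 ∉ A and 3 ∈ A; and x(x+1)(x+2)/6 if 2,3 ∉ A. -/

import Mathlib

open scoped Classical

/-- Sum of those divisors of `j` that belong to the multiset of positive integers
with multiplicity function `μ`, counted with multiplicity: `σ_A(j) = ∑_{d ∣ j} d·μ(d)`. -/
noncomputable def sigmaA (μ : ℕ → ℕ) (j : ℕ) : ℕ := ∑ d ∈ Nat.divisors j, d * μ d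

/-- The polynomials `f_{A,n}(x)` associated with the multiset of positive integers
with multiplicity function `μ`, defined (equivalently to the generating function
`∑ f_{A,n}(x) qⁿ = ∏_{a∈A} (1/(1-q^a))^x`) by `f_{A,0} = 1` and the recurrence
`f_{A,n}(x) = (x/n) ∑_{j=1}^{n} σ_A(j) f_{A,n-j}(x)`. -/
noncomputable def fA (μ : ℕ → ℕ) : ℕ → ℝ → ℝ
  | 0, _ => 1
  | n + 1, x =>
      x / (n + 1) * ∑ j ∈ Finset.range (n + 1), (sigmaA μ (j + 1) : ℝ) * fA μ (n - j) x
  decreasing_by exact Nat.lt_succ_of_le (Nat.sub_le n j)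

/-- `f_{A,n}(x)` for an ordinary set `A` of positive integers. -/
noncomputable def fS (A : Set ℕ) : ℕ → ℝ → ℝ := fA (fun a => if a ∈ A then 1 else 0)

theorem fA_zero (μ : ℕ → ℕ) (x : ℝ) : fA μ 0 x = 1 := by
  rw [fA]

theorem fA_three (μ : ℕ → ℕ) (x : ℝ) :
    fA μ 3 x = x / 6 * ((sigmaA μ 1 : ℝ) ^ 3 * x ^ 2
      + 3 * sigmaA μ 1 * sigmaA μ 2 * x + 2 * sigmaA μ 3) := by
  simp only [fA, Finset.sum_range_succ, Finset.range_one, Finset.sum_singleton, Nat.reduceSub, fA_zero]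
  push_cast
  ring

theorem sigmaA_one (μ : ℕ → ℕ) : sigmaA μ 1 = μ 1 := by
  rw [sigmaA, Nat.divisors_one, Finset.sum_singleton, one_mul]

theorem sigmaA_prime (μ : ℕ → ℕ) {p : ℕ} (hp : p.Prime) : sigmaA μ p = μ 1 + p * μ p := by
  rw [sigmaA, hp.sum_divisors, one_mul, add_comm]

theorem stmt_9_general (A : Set ℕ) (h1 : 1 ∈ A) (x : ℝ) :
    (2 ∈ A → 3 ∈ A → fS A 3 x = x * (x + 1) * (x + 8) / 6) ∧
    (2 ∈ A → 3 ∉ A → fS A 3 x = x * (x ^ 2 + 9 * x + 2) / 6) ∧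
    (2 ∉ A → 3 ∈ A → fS A 3 x = x * (x ^ 2 + 3 * x + 8) / 6) ∧
    (2 ∉ A → 3 ∉ A → fS A 3 x = x * (x + 1) * (x + 2) / 6) := by
  rw [fS, fA_three, sigmaA_one, sigmaA_prime _ Nat.prime_two, sigmaA_prime _ Nat.prime_three]
  refine ⟨?_, ?_, ?_, ?_⟩ <;> intro h2 h3 <;> simp only [h1, h2, h3, ↓reduceIte] <;> push_cast <;> ring

/-- For a set A of positive integers with 1 in A, the four cases for f_{A,3}(x) according to whether 2 and 3 belong to A. -/
theorem stmt_9 (A : Set ℕ) (h0 : 0 ∉ A) (h1 : 1 ∈ A) (x : ℝ) :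
    (2 ∈ A → 3 ∈ A → fS A 3 x = x * (x + 1) * (x + 8) / 6) ∧
    (2 ∈ A → 3 ∉ A → fS A 3 x = x * (x ^ 2 + 9 * x + 2) / 6) ∧
    (2 ∉ A → 3 ∈ A → fS A 3 x = x * (x ^ 2 + 3 * x + 8) / 6) ∧
    (2 ∉ A → 3 ∉ A → fS A 3 x = x * (x + 1) * (x + 2) / 6) :=
  stmt_9_general A h1 x
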